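/- Let k₁ ∈ ℂ with Re(k₁) > 0 and Im(k₁) > 0 (the open first quadrant), and let η, η̃ ∈ ℂ² with m_{k₁}(η,η) ≠ 0 and m_{k₁}(η̃,η̃) ≠ 0. Then the complex conjugate of A_{k₁}(η̃) equals A_{k₁}(η) if and only if |η₁|²·|η̃₁|² = |η₂|²·|η̃₂|². -/
import Mathlib


open Complex

noncomputable def mK (k : ℂ) (η : ℂ × ℂ) : ℂ :=
  k * (Complex.normSq η.1 : ℝ) + (starRingEnd ℂ) k * (Complex.normSq η.2 : ℝ)

noncomputable def AK (k : ℂ) (η : ℂ × ℂ) : ℂ :=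
  mK ((starRingEnd ℂ) k) η / mK k η

noncomputable def CK (k : ℂ) (η : ℂ × ℂ) : ℂ :=
  (k ^ 2 - ((starRingEnd ℂ) k) ^ 2) * η.1 * (starRingEnd ℂ) η.2 / mK k η

lemma conj_mK (k : ℂ) (η : ℂ × ℂ) :
    (starRingEnd ℂ) (mK k η) = mK ((starRingEnd ℂ) k) η := by
  simp [mK, Complex.conj_ofReal]

theorem conj_AK_eq_AK_iff (k₁ : ℂ) (hre : 0 < k₁.re) (him : 0 < k₁.im)
    (η ηt : ℂ × ℂ) (hm : mK k₁ η ≠ 0) (hmt : mK k₁ ηt ≠ 0) :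
    (starRingEnd ℂ) (AK k₁ ηt) = AK k₁ η ↔
      Complex.normSq η.1 * Complex.normSq ηt.1 =
        Complex.normSq η.2 * Complex.normSq ηt.2 := by
  have hmt' : mK ((starRingEnd ℂ) k₁) ηt ≠ 0 := by
    rw [← conj_mK]
    exact (map_ne_zero (starRingEnd ℂ)).mpr hmt
  have hk2 : k₁ ^ 2 - ((starRingEnd ℂ) k₁) ^ 2 ≠ 0 := by
    intro h
    have h2 := congrArg Complex.im h
    simp [pow_two, Complex.sub_im, Complex.mul_im, Complex.conj_re, Complex.conj_im] at h2
    nlinarith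
  rw [AK, AK, map_div₀, conj_mK, conj_mK, Complex.conj_conj,
    div_eq_div_iff hmt' hm]
  set a := (Complex.normSq η.1 : ℝ)
  set b := (Complex.normSq η.2 : ℝ)
  set c := (Complex.normSq ηt.1 : ℝ)
  set d := (Complex.normSq ηt.2 : ℝ)
  constructor
  · intro h
    have key : (k₁ ^ 2 - ((starRingEnd ℂ) k₁) ^ 2) * ((a : ℂ) * c - (b : ℂ) * d) = 0 := by
      simp only [mK, Complex.conj_conj] at h
      linear_combination h
    rcases mul_eq_zero.mp key with h' | h'
    · exact absurd h' hk2
    · have : (a : ℂ) * c = (b : ℂ) * d := sub_eq_zero.mp h'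
      exact_mod_cast this
  · intro h
    have h' : (a : ℂ) * c = (b : ℂ) * d := by exact_mod_cast h
    simp only [mK, Complex.conj_conj]
    linear_combination (k₁ ^ 2 - ((starRingEnd ℂ) k₁) ^ 2) * h'
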